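/- Let k be a commutative ring and A a commutative k-algebra, Ω_{A/k} the module of Kähler differentials with universal derivation d : A → Ω_{A/k}, and for each p, Δ let d̄ : A[[s]]_Δ → Ω_{A/k}[[s]]_Δ be the coefficientwise application of d. Then the A-module Ω_{A/k} carries a unique left pre-HS-module structure {fLie^p_Δ} over A/k such that d is a HS-map, i.e. such that fLie^p_Δ(D) ∘ d̄ = d̄ ∘ D̃ for every p ∈ ℕ, every nonempty co-ideal Δ ⊆ ℕ^p, and every D ∈ HS^p_k(A;Δ). In particular, writing fLie^p_Δ(D) = Σ_α fLie^p_Δ(D)_α s^α, one has fLie^p_Δ(D)_α ∘ d = d ∘ D_α for all α ∈ Δ. -/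

import Mathlib

/-!
The universal property of `Ω_{A/k}` does all the work. For `D ∈ HS^p_k(A;Δ)`, regard
`Ω_{A/k}[[s]]_Δ` as an `A`-module by restriction of scalars along the ring homomorphism
`D̃ : A → A[[s]]_Δ`; then `a ↦ d̄(D̃ a)` is a `k`-derivation into it, hence factors through an
`A`-linear map `Ω_{A/k} → Ω_{A/k}[[s]]_Δ`, whose coefficients are `fLie(D)`. By construction
`fLie(D)` is `D̃`-semilinear and satisfies `fLie(D) ∘ d̄ = d̄ ∘ D̃`, and since `Ω_{A/k}` is
generated by the `a • d b` these two properties characterise it. This gives uniqueness, and also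
multiplicativity and independence of representatives, because the competing family has the same
two properties. Compatibility with a substitution map `φ` reduces on generators to `φ` being
multiplicative; constant coefficients are what let `φ` pass through `d`.
-/

open scoped Classical

namespace HS

/-- multi-indices in `ℕ^p` -/
abbrev MIdx (p : ℕ) := Fin p → ℕ

/-- the total weight `|α|` of a multi-index -/
def wt {p : ℕ} (α : MIdx p) : ℕ := ∑ i, α i

/-- a non-empty co-ideal of `ℕ^p` -/
def IsCoideal {p : ℕ} (Δ : Set (MIdx p)) : Prop :=
  Δ.Nonempty ∧ ∀ ⦃α : MIdx p⦄, α ∈ Δ → ∀ ⦃β : MIdx p⦄, β ≤ α → β ∈ Δ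

/-- Convolution product of two power series, given by their coefficient families:
this is the multiplication of `R[[s]]_Δ` (in terms of representatives). -/
def sconv {p : ℕ} {R : Type*} [NonUnitalNonAssocSemiring R] (f g : MIdx p → R) : MIdx p → R :=
  fun α => ∑ β ∈ Finset.Iic α, f β * g (α - β)

/-- Applying a series of linear operators to a series of module elements; for an
operator family `f`, `fapply f` is the induced `k[[s]]_Δ`-linear map `f̃ = ∑ f_β s^β`. -/
def fapply {p : ℕ} {k M N : Type*} [Semiring k] [AddCommMonoid M] [AddCommMonoid N]
    [Module k M] [Module k N] (f : MIdx p → (M →ₗ[k] N)) (m : MIdx p → M) : MIdx p → N :=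
  fun α => ∑ β ∈ Finset.Iic α, f β (m (α - β))

/-- a series of scalars acting on a series of module elements:
the module structure of `M[[s]]_Δ` over `A[[s]]_Δ` (in terms of representatives). -/
def smul' {p : ℕ} {A M : Type*} [Semiring A] [AddCommMonoid M] [Module A M]
    (a : MIdx p → A) (m : MIdx p → M) : MIdx p → M :=
  fun α => ∑ β ∈ Finset.Iic α, a β • m (α - β)

/-- the unit (delta) series `1` -/
def one' {p : ℕ} {R : Type*} [Zero R] [One R] : MIdx p → R :=
  fun α => if α = 0 then 1 else 0

/-- `D` is a `(p,Δ)`-variate Hasse–Schmidt derivation of `A` over `k`: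
`D_0 = id` and the Leibniz rule `D_α(xy) = ∑_{β+γ=α} D_β(x) D_γ(y)` for `α ∈ Δ`. -/
def IsHS (k A : Type*) [CommRing k] [CommRing A] [Algebra k A] {p : ℕ}
    (Δ : Set (MIdx p)) (D : MIdx p → Module.End k A) : Prop :=
  D 0 = 1 ∧ ∀ α ∈ Δ, ∀ x y : A,
    D α (x * y) = ∑ β ∈ Finset.Iic α, D β x * D (α - β) y

/-- A substitution map `φ : A[[s]]_Δ → A[[t]]_∇`, modelled by the family of its
coefficients `C α e = C_e(φ,α)` (the coefficient of `t^e` in `φ(s^α)`):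
it is multiplicative on monomials, unital, of order `≥ 1` (so `C α e = 0` for
`|e| < |α|`), kills the classes of monomials `s^α` with `α ∉ Δ`, and is
normalized to vanish outside `∇`. -/
structure SubstMap (A : Type*) [CommRing A] (p q : ℕ)
    (Δ : Set (MIdx p)) (nab : Set (MIdx q)) where
  C : MIdx p → MIdx q → A
  c_zero : ∀ e ∈ nab, C 0 e = if e = 0 then 1 else 0
  c_mul : ∀ α ∈ Δ, ∀ β ∈ Δ, ∀ e ∈ nab,
    C (α + β) e = ∑ u ∈ Finset.Iic e, C α u * C β (e - u)
  c_ord : ∀ α ∈ Δ, ∀ e ∈ nab, wt e < wt α → C α e = 0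
  c_suppL : ∀ α : MIdx p, α ∉ Δ → ∀ e : MIdx q, C α e = 0
  c_suppR : ∀ (α : MIdx p) (e : MIdx q), e ∉ nab → C α e = 0

variable {A' : Type*} [CommRing A'] {p' q' : ℕ} {Δ' : Set (MIdx p')} {nab' : Set (MIdx q')}

/-- the map `A[[s]]_Δ → A[[t]]_∇` induced by a substitution map -/
def SubstMap.app (φ : SubstMap A' p' q' Δ' nab') (f : MIdx p' → A') : MIdx q' → A' :=
  fun e => ∑ α ∈ Finset.Iic (fun _ => wt e : MIdx p'), φ.C α e * f α

/-- `φ • D` for a series of `k`-linear endomorphisms of `A` -/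
def SubstMap.bulletEnd {k : Type*} [CommRing k] [Algebra k A']
    (φ : SubstMap A' p' q' Δ' nab') (D : MIdx p' → Module.End k A') :
    MIdx q' → Module.End k A' :=
  fun e => ∑ α ∈ Finset.Iic (fun _ => wt e : MIdx p'), φ.C α e • D α

/-- `φ • r` for a series with coefficients in a `k`-algebra `S` over `A`
(with structural map `ι : A → S`) -/
def SubstMap.bulletS {S : Type*} [Ring S] (ι : A' → S)
    (φ : SubstMap A' p' q' Δ' nab') (r : MIdx p' → S) : MIdx q' → S :=
  fun e => ∑ α ∈ Finset.Iic (fun _ => wt e : MIdx p'), ι (φ.C α e) * r α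

/-- `r • φ` for a series with coefficients in a `k`-algebra `S` over `A` -/
def SubstMap.bulletSR {S : Type*} [Ring S] (ι : A' → S)
    (φ : SubstMap A' p' q' Δ' nab') (r : MIdx p' → S) : MIdx q' → S :=
  fun e => ∑ α ∈ Finset.Iic (fun _ => wt e : MIdx p'), r α * ι (φ.C α e)

/-- `φ • m` for a series with coefficients in an `A`-module `M` -/
def SubstMap.bulletM {M : Type*} [AddCommMonoid M] [Module A' M]
    (φ : SubstMap A' p' q' Δ' nab') (m : MIdx p' → M) : MIdx q' → M :=
  fun e => ∑ α ∈ Finset.Iic (fun _ => wt e : MIdx p'), φ.C α e • m α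

/-- `φ` has constant coefficients, i.e. all the `C_e(φ,α)` come from `k` -/
def SubstMap.HasConstCoeffs (k : Type*) [CommRing k] [Algebra k A']
    (φ : SubstMap A' p' q' Δ' nab') : Prop :=
  ∀ (α : MIdx p') (e : MIdx q'), φ.C α e ∈ Set.range (algebraMap k A')

/-- a system of maps `Ψ^p_Δ : HS^p_k(A;Δ) → U^p(End_k(M);Δ)` as in a
(pre-)HS-module structure on `M` over `A/k` -/
abbrev HSSystem (k A M : Type*) [CommRing k] [CommRing A] [Algebra k A]
    [AddCommMonoid M] [Module k M] : Type _ :=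
  ∀ (p : ℕ) (Δ : Set (MIdx p)), (MIdx p → Module.End k A) → (MIdx p → Module.End k M)

/-- `Ψ` is a left pre-HS-module structure on `M` over `A/k`:  for each `p`, each
non-empty co-ideal `Δ ⊆ ℕ^p` and each `D ∈ HS^p_k(A;Δ)`, the automorphism
`Ψ^p_Δ(D)` of `M[[s]]_Δ` (given by its family of coefficients in `End_k(M)`) has
constant coefficient the identity, depends only on the class of `D`, is
multiplicative in `D`, is invertible, satisfies the Leibniz rule
`Ψ^p_Δ(D)·a = D̃(a)·Ψ^p_Δ(D)`, and is compatible with the action of substitution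
maps with constant coefficients:  `Ψ^q_∇(φ•D) = φ•Ψ^p_Δ(D)`. -/
def IsPreHSMod (k A M : Type*) [CommRing k] [CommRing A] [Algebra k A]
    [AddCommGroup M] [Module k M] [Module A M] [IsScalarTower k A M]
    (Ψ : HSSystem k A M) : Prop :=
  ∀ (p : ℕ) (Δ : Set (MIdx p)), IsCoideal Δ →
    ∀ D : MIdx p → Module.End k A, IsHS k A Δ D →
      (Ψ p Δ D 0 = 1)
      ∧ (∀ D' : MIdx p → Module.End k A, IsHS k A Δ D' → (∀ α ∈ Δ, D α = D' α) →
          ∀ α ∈ Δ, Ψ p Δ D α = Ψ p Δ D' α)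
      ∧ (∀ E : MIdx p → Module.End k A, IsHS k A Δ E →
          ∀ α ∈ Δ, Ψ p Δ (sconv D E) α = sconv (Ψ p Δ D) (Ψ p Δ E) α)
      ∧ (∃ Θ : MIdx p → Module.End k M,
          (∀ α ∈ Δ, sconv (Ψ p Δ D) Θ α = (one' : MIdx p → Module.End k M) α)
          ∧ (∀ α ∈ Δ, sconv Θ (Ψ p Δ D) α = (one' : MIdx p → Module.End k M) α))
      ∧ (∀ (a : MIdx p → A) (m : MIdx p → M), ∀ α ∈ Δ,
          fapply (Ψ p Δ D) (smul' a m) α = smul' (fapply D a) (fapply (Ψ p Δ D) m) α)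
      ∧ (∀ (q : ℕ) (nab : Set (MIdx q)), IsCoideal nab →
          ∀ φ : SubstMap A p q Δ nab, φ.HasConstCoeffs k →
          ∀ e ∈ nab, ∀ x : M,
            Ψ q nab (φ.bulletEnd D) e x
              = ∑ α ∈ Finset.Iic (fun _ => wt e : MIdx p), φ.C α e • Ψ p Δ D α x)

/-- `Ψ` is a left HS-module structure on `M` over `A/k`: as `IsPreHSMod`, but with
compatibility with the action of arbitrary substitution maps. -/
def IsHSMod (k A M : Type*) [CommRing k] [CommRing A] [Algebra k A]
    [AddCommGroup M] [Module k M] [Module A M] [IsScalarTower k A M]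
    (Ψ : HSSystem k A M) : Prop :=
  ∀ (p : ℕ) (Δ : Set (MIdx p)), IsCoideal Δ →
    ∀ D : MIdx p → Module.End k A, IsHS k A Δ D →
      (Ψ p Δ D 0 = 1)
      ∧ (∀ D' : MIdx p → Module.End k A, IsHS k A Δ D' → (∀ α ∈ Δ, D α = D' α) →
          ∀ α ∈ Δ, Ψ p Δ D α = Ψ p Δ D' α)
      ∧ (∀ E : MIdx p → Module.End k A, IsHS k A Δ E →
          ∀ α ∈ Δ, Ψ p Δ (sconv D E) α = sconv (Ψ p Δ D) (Ψ p Δ E) α)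
      ∧ (∃ Θ : MIdx p → Module.End k M,
          (∀ α ∈ Δ, sconv (Ψ p Δ D) Θ α = (one' : MIdx p → Module.End k M) α)
          ∧ (∀ α ∈ Δ, sconv Θ (Ψ p Δ D) α = (one' : MIdx p → Module.End k M) α))
      ∧ (∀ (a : MIdx p → A) (m : MIdx p → M), ∀ α ∈ Δ,
          fapply (Ψ p Δ D) (smul' a m) α = smul' (fapply D a) (fapply (Ψ p Δ D) m) α)
      ∧ (∀ (q : ℕ) (nab : Set (MIdx q)), IsCoideal nab →
          ∀ φ : SubstMap A p q Δ nab,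
          ∀ e ∈ nab, ∀ x : M,
            Ψ q nab (φ.bulletEnd D) e x
              = ∑ α ∈ Finset.Iic (fun _ => wt e : MIdx p), φ.C α e • Ψ p Δ D α x)

section MultiIndex

variable {p : ℕ}

lemma wt_strictMono : StrictMono (wt : MIdx p → ℕ) := fun a b h => by
  obtain ⟨hle, i, hi⟩ := Pi.lt_def.1 h
  exact Finset.sum_lt_sum (fun j _ => hle j) ⟨i, Finset.mem_univ i, hi⟩

lemma lt_wt_of_not_le_const {a : MIdx p} {n : ℕ} (h : ¬ a ≤ fun _ => n) : n < wt a := by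
  obtain ⟨i, hi⟩ := not_forall.1 h
  exact (not_le.1 hi).trans_le
    (Finset.single_le_sum (fun _ _ => Nat.zero_le _) (Finset.mem_univ i))

variable {M : Type*} [AddCommMonoid M]

lemma sum_Iic_zero (f : MIdx p → M) : ∑ β ∈ Finset.Iic 0, f β = f 0 := by
  rw [show Finset.Iic (0 : MIdx p) = {0} from Finset.Iic_bot, Finset.sum_singleton]

lemma sum_Iic_tsub_comm (α : MIdx p) (f : MIdx p → MIdx p → M) :
    ∑ β ∈ Finset.Iic α, f β (α - β) = ∑ β ∈ Finset.Iic α, f (α - β) β := by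
  refine Finset.sum_nbij' (α - ·) (α - ·) ?_ ?_ ?_ ?_ ?_ <;>
    simp only [Finset.mem_Iic] <;> intro β hβ
  · exact tsub_le_self
  · exact tsub_le_self
  · exact tsub_tsub_cancel_of_le hβ
  · exact tsub_tsub_cancel_of_le hβ
  · rw [tsub_tsub_cancel_of_le hβ]

lemma sum_Iic_assoc (α : MIdx p) (f : MIdx p → MIdx p → MIdx p → M) :
    ∑ β ∈ Finset.Iic α, ∑ γ ∈ Finset.Iic (α - β), f β γ (α - β - γ)
      = ∑ δ ∈ Finset.Iic α, ∑ β ∈ Finset.Iic δ, f β (δ - β) (α - δ) := by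
  rw [Finset.sum_sigma', Finset.sum_sigma']
  refine Finset.sum_nbij' (fun x => ⟨x.1 + x.2, x.1⟩) (fun y => ⟨y.2, y.1 - y.2⟩)
    ?_ ?_ ?_ ?_ ?_ <;> rintro ⟨u, v⟩ h <;> simp only [Finset.mem_sigma, Finset.mem_Iic] at h ⊢
  · exact ⟨(le_tsub_iff_left h.1).1 h.2, le_self_add⟩
  · exact ⟨h.2.trans h.1, tsub_le_tsub_right h.1 v⟩
  · simp
  · simp [add_tsub_cancel_of_le h.2]
  · rw [add_tsub_cancel_left, tsub_tsub]

lemma sum_Iic_sum_Iic_comm (ρ : MIdx p) (f : MIdx p → MIdx p → MIdx p → M) :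
    ∑ γ ∈ Finset.Iic ρ, ∑ c ∈ Finset.Iic (ρ - γ), f c γ (ρ - γ - c)
      = ∑ c ∈ Finset.Iic ρ, ∑ γ ∈ Finset.Iic (ρ - c), f c γ (ρ - c - γ) := by
  rw [sum_Iic_assoc ρ (fun γ c z => f c γ z), sum_Iic_assoc ρ f]
  exact Finset.sum_congr rfl fun δ _ => sum_Iic_tsub_comm δ fun γ c => f c γ (ρ - δ)

/-- Both sides sum `F i c j z` over all decompositions `α = i + c + j + z`. -/
lemma sum_Iic_interchange (α : MIdx p) (F : MIdx p → MIdx p → MIdx p → MIdx p → M) :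
    ∑ β ∈ Finset.Iic α, ∑ i ∈ Finset.Iic β, ∑ j ∈ Finset.Iic (α - β),
        F i (β - i) j (α - β - j)
      = ∑ u ∈ Finset.Iic α, ∑ c ∈ Finset.Iic (α - u), ∑ i ∈ Finset.Iic u,
        F i c (u - i) (α - u - c) := by
  calc _ = ∑ i ∈ Finset.Iic α, ∑ c ∈ Finset.Iic (α - i), ∑ j ∈ Finset.Iic (α - i - c),
          F i c j (α - i - c - j) :=
        (sum_Iic_assoc α fun i c ρ => ∑ j ∈ Finset.Iic ρ, F i c j (ρ - j)).symm
    _ = ∑ i ∈ Finset.Iic α, ∑ j ∈ Finset.Iic (α - i), ∑ c ∈ Finset.Iic (α - i - j),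
          F i c j (α - i - j - c) :=
        Finset.sum_congr rfl fun i _ => (sum_Iic_sum_Iic_comm (α - i) (F i)).symm
    _ = ∑ u ∈ Finset.Iic α, ∑ i ∈ Finset.Iic u, ∑ c ∈ Finset.Iic (α - u),
          F i c (u - i) (α - u - c) :=
        sum_Iic_assoc α fun i j ρ => ∑ c ∈ Finset.Iic ρ, F i c j (ρ - c)
    _ = _ := Finset.sum_congr rfl fun u _ => Finset.sum_comm

lemma sum_Iic_sum_Iic_tsub_eq_of_vanish (K : MIdx p) (g : MIdx p → MIdx p → M)
    (hg : ∀ β γ, ¬ β + γ ≤ K → g β γ = 0) :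
    ∑ α ∈ Finset.Iic K, ∑ β ∈ Finset.Iic α, g β (α - β)
      = ∑ β ∈ Finset.Iic K, ∑ γ ∈ Finset.Iic K, g β γ := by
  rw [← sum_Iic_assoc K fun β γ _ => g β γ]
  refine Finset.sum_congr rfl fun β _ =>
    Finset.sum_subset (Finset.Iic_subset_Iic.2 tsub_le_self) fun γ _ hγ => hg β γ fun hle => ?_
  exact hγ (Finset.mem_Iic.2 (le_tsub_of_add_le_left hle))

end MultiIndex

section Convolution

variable {p : ℕ} {R : Type*} [Ring R]

lemma one'_sconv (f : MIdx p → R) : sconv one' f = f := by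
  funext α
  rw [sconv, Finset.sum_eq_single_of_mem 0 (Finset.mem_Iic.2 zero_le)]
  · simp [one']
  · intro β _ hβ
    simp [one', hβ]

lemma sconv_one' (f : MIdx p → R) : sconv f one' = f := by
  funext α
  rw [sconv, Finset.sum_eq_single_of_mem α (Finset.mem_Iic.2 le_rfl)]
  · simp [one']
  · intro β hβ hne
    have : α - β ≠ 0 := fun h =>
      hne (le_antisymm (Finset.mem_Iic.1 hβ) (tsub_eq_zero_iff_le.1 h))
    simp [one', this]

lemma sconv_assoc (f g h : MIdx p → R) : sconv (sconv f g) h = sconv f (sconv g h) := by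
  funext α
  simp only [sconv, Finset.sum_mul, Finset.mul_sum, mul_assoc]
  exact (sum_Iic_assoc α fun x y z => f x * (g y * h z)).symm

/-- The inverse of a series with constant coefficient `1`, by the recursion expressing
`sconv (sconvInv f) f = one'`. -/
noncomputable def sconvInv (f : MIdx p → R) : MIdx p → R := fun α =>
  (one' : MIdx p → R) α
    - ∑ β ∈ ((Finset.Iic α).erase α).attach, sconvInv f β.1 * f (α - β.1)
termination_by α => wt α
decreasing_by
  exact wt_strictMono (lt_of_le_of_ne (Finset.mem_Iic.1 (Finset.mem_of_mem_erase β.2))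
    (Finset.ne_of_mem_erase β.2))

lemma sconvInv_zero (f : MIdx p → R) : sconvInv f 0 = 1 := by
  have h : (Finset.Iic (0 : MIdx p)).erase 0 = ∅ := by
    rw [show Finset.Iic (0 : MIdx p) = {0} from Finset.Iic_bot, Finset.erase_singleton]
  rw [sconvInv, h]
  simp [one']

lemma sconvInv_sconv {f : MIdx p → R} (hf : f 0 = 1) : sconv (sconvInv f) f = one' := by
  funext α
  rw [sconv, ← Finset.add_sum_erase _ _ (Finset.mem_Iic.2 le_rfl), tsub_self, hf, mul_one]
  conv_lhs => rw [sconvInv]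
  rw [Finset.sum_attach ((Finset.Iic α).erase α) fun β => sconvInv f β * f (α - β)]
  abel

lemma sconv_sconvInv {f : MIdx p → R} (hf : f 0 = 1) : sconv f (sconvInv f) = one' := by
  set g := sconvInv f
  have hfg : f = sconvInv g := by
    calc f = sconv (sconv (sconvInv g) g) f := by
          rw [sconvInv_sconv (sconvInv_zero f), one'_sconv]
      _ = sconvInv g := by rw [sconv_assoc, sconvInv_sconv hf, sconv_one']
  rw [hfg]
  exact sconvInv_sconv (sconvInv_zero f)

end Convolution

section Coideal

variable {p : ℕ} {Δ : Set (MIdx p)}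

lemma IsCoideal.zero_mem (hΔ : IsCoideal Δ) : (0 : MIdx p) ∈ Δ :=
  hΔ.1.elim fun _ hα => hΔ.2 hα zero_le

lemma IsCoideal.mem_of_le (hΔ : IsCoideal Δ) {α β : MIdx p} (hα : α ∈ Δ) (h : β ≤ α) :
    β ∈ Δ :=
  hΔ.2 hα h

lemma IsCoideal.tsub_mem (hΔ : IsCoideal Δ) {α : MIdx p} (hα : α ∈ Δ) (β : MIdx p) :
    α - β ∈ Δ :=
  hΔ.2 hα tsub_le_self

end Coideal

section Semilinear

variable {k A : Type*} [CommRing k] [CommRing A] [Algebra k A] {p : ℕ} {Δ : Set (MIdx p)}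
  {D E : MIdx p → Module.End k A}

/-- `Φ` is `D̃`-semilinear, `Φ̃(a m) = D̃(a) Φ̃(m)`, written out on the coefficients in `Δ`. -/
def IsSemilinearSeries {M N : Type*} [AddCommMonoid M] [Module A M] [Module k M]
    [AddCommMonoid N] [Module A N] [Module k N]
    (Δ : Set (MIdx p)) (D : MIdx p → Module.End k A) (Φ : MIdx p → (M →ₗ[k] N)) : Prop :=
  ∀ α ∈ Δ, ∀ (a : A) (m : M), Φ α (a • m) = ∑ β ∈ Finset.Iic α, D β a • Φ (α - β) m

section

variable {M N : Type*} [AddCommMonoid M] [Module A M] [Module k M]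
  [AddCommMonoid N] [Module A N] [Module k N] {Φ : MIdx p → (M →ₗ[k] N)}

lemma IsSemilinearSeries.congr (hΔ : IsCoideal Δ) (hΦ : IsSemilinearSeries Δ E Φ)
    (hDE : ∀ α ∈ Δ, D α = E α) : IsSemilinearSeries Δ D Φ := by
  intro α hα a m
  rw [hΦ α hα]
  exact Finset.sum_congr rfl fun β hβ => by
    rw [hDE β (hΔ.mem_of_le hα (Finset.mem_Iic.1 hβ))]

lemma fapply_single_zero {L : Type*} [AddCommMonoid L] [Module k L]
    (f : MIdx p → (M →ₗ[k] L)) (x : M) (α : MIdx p) :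
    fapply f (Pi.single 0 x) α = f α x := by
  rw [fapply, Finset.sum_eq_single_of_mem α (Finset.mem_Iic.2 le_rfl)]
  · rw [tsub_self, Pi.single_eq_same]
  · intro β hβ hne
    have : α - β ≠ 0 := fun h =>
      hne (le_antisymm (Finset.mem_Iic.1 hβ) (tsub_eq_zero_iff_le.1 h))
    rw [Pi.single_eq_of_ne this, map_zero]

lemma smul'_single_zero (a : A) (m : M) :
    smul' (Pi.single 0 a) (Pi.single 0 m) = (Pi.single 0 (a • m) : MIdx p → M) := by
  funext γ
  rw [smul', Finset.sum_eq_single_of_mem 0 (Finset.mem_Iic.2 zero_le)]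
  · rw [Pi.single_eq_same, tsub_zero, Pi.single_apply, Pi.single_apply, smul_ite, smul_zero]
  · intro β _ hβ
    rw [Pi.single_eq_of_ne hβ, zero_smul]

lemma isSemilinearSeries_iff_fapply_smul' (hΔ : IsCoideal Δ) :
    IsSemilinearSeries Δ D Φ ↔ ∀ (a : MIdx p → A) (m : MIdx p → M), ∀ α ∈ Δ,
      fapply Φ (smul' a m) α = smul' (fapply D a) (fapply Φ m) α := by
  refine ⟨fun hΦ a m α hα => ?_, fun h α hα a m => ?_⟩
  · have lhs : fapply Φ (smul' a m) α
        = ∑ u ∈ Finset.Iic α, ∑ c ∈ Finset.Iic (α - u), ∑ i ∈ Finset.Iic u,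
            D i (a c) • Φ (u - i) (m (α - u - c)) := by
      refine Finset.sum_congr rfl fun u hu => ?_
      rw [smul', map_sum]
      exact Finset.sum_congr rfl fun c _ => hΦ u (hΔ.mem_of_le hα (Finset.mem_Iic.1 hu)) _ _
    have rhs : smul' (fapply D a) (fapply Φ m) α
        = ∑ u ∈ Finset.Iic α, ∑ i ∈ Finset.Iic u, ∑ j ∈ Finset.Iic (α - u),
            D i (a (u - i)) • Φ j (m (α - u - j)) := by
      refine Finset.sum_congr rfl fun u _ => ?_
      simp only [fapply, Finset.sum_smul]
      simp only [Finset.smul_sum]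
    rw [lhs, rhs]
    exact (sum_Iic_interchange α fun i c j z => D i (a c) • Φ j (m z)).symm
  · have := h (Pi.single 0 a) (Pi.single 0 m) α hα
    simp only [smul'_single_zero, fapply_single_zero, smul'] at this
    exact this

lemma sconv_apply (Φ Ψ : MIdx p → Module.End k M) (α : MIdx p) (m : M) :
    sconv Φ Ψ α m = fapply Φ (fun γ => Ψ γ m) α := by
  simp only [sconv, fapply, LinearMap.sum_apply, Module.End.mul_apply]

end

lemma IsSemilinearSeries.sconv {M : Type*} [AddCommGroup M] [Module A M] [Module k M]
    {Φ Ψ : MIdx p → Module.End k M} (hΔ : IsCoideal Δ)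
    (hΦ : IsSemilinearSeries Δ D Φ) (hΨ : IsSemilinearSeries Δ E Ψ) :
    IsSemilinearSeries Δ (sconv D E) (sconv Φ Ψ) := by
  intro α hα a m
  have hΨ' : fapply Φ (fun γ => Ψ γ (a • m)) α
      = fapply Φ (smul' (fun c => E c a) fun γ => Ψ γ m) α :=
    Finset.sum_congr rfl fun u _ => by
      simp only [hΨ (α - u) (hΔ.tsub_mem hα u), smul']
  rw [sconv_apply, hΨ', (isSemilinearSeries_iff_fapply_smul' hΔ).1 hΦ _ _ α hα, smul']
  exact Finset.sum_congr rfl fun β _ => by rw [sconv_apply, sconv_apply]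

namespace IsHS

lemma isSemilinearSeries (hD : IsHS k A Δ D) : IsSemilinearSeries Δ D D := hD.2

lemma apply_one (hΔ : IsCoideal Δ) (hD : IsHS k A Δ D) {α : MIdx p} (hα : α ∈ Δ) :
    D α 1 = (one' : MIdx p → A) α := by
  induction h : wt α using Nat.strong_induction_on generalizing α with
  | _ n ih =>
    rcases eq_or_ne α 0 with rfl | hα0
    · simp [hD.1, one']
    have hsplit := hD.2 α hα 1 1
    rw [mul_one, Finset.sum_eq_add_of_mem 0 α (Finset.mem_Iic.2 zero_le)
      (Finset.mem_Iic.2 le_rfl) hα0.symm, tsub_zero, tsub_self, hD.1] at hsplit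
    · simp only [Module.End.one_apply, one_mul, mul_one, left_eq_add] at hsplit
      simp [hsplit, one', hα0]
    · rintro β hβ ⟨hβ0, hβα⟩
      have hlt : β < α := lt_of_le_of_ne (Finset.mem_Iic.1 hβ) hβα
      rw [ih _ (h ▸ wt_strictMono hlt) (hΔ.mem_of_le hα hlt.le) rfl, one', if_neg hβ0,
        zero_mul]

lemma sconv (hΔ : IsCoideal Δ) (hD : IsHS k A Δ D) (hE : IsHS k A Δ E) :
    IsHS k A Δ (HS.sconv D E) := by
  refine ⟨?_, hD.isSemilinearSeries.sconv hΔ hE.isSemilinearSeries⟩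
  rw [HS.sconv, sum_Iic_zero, tsub_zero, hD.1, hE.1, one_mul]

end IsHS

end Semilinear

noncomputable section TwistedSeries

variable {k A : Type*} [CommRing k] [CommRing A] [Algebra k A] {p : ℕ} {Δ : Set (MIdx p)}
  {D : MIdx p → Module.End k A} (M : Type*) [AddCommGroup M] [Module k M]

/-- `M[[s]]_Δ`, made an `A`-module by restricting scalars along `D̃ : A → A[[s]]_Δ`. -/
def TwistedSeries (_ : IsCoideal Δ) (_ : IsHS k A Δ D) : Type _ := Δ → M

variable {M} {hΔ : IsCoideal Δ} {hD : IsHS k A Δ D}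

namespace TwistedSeries

instance : AddCommGroup (TwistedSeries M hΔ hD) := inferInstanceAs (AddCommGroup (Δ → M))

instance : Module k (TwistedSeries M hΔ hD) := inferInstanceAs (Module k (Δ → M))

variable (hΔ hD) in
def extend : TwistedSeries M hΔ hD →ₗ[k] (MIdx p → M) where
  toFun n ρ := if h : ρ ∈ Δ then n ⟨ρ, h⟩ else 0
  map_add' n m := funext fun ρ => by
    by_cases h : ρ ∈ Δ <;> simp only [Pi.add_apply, h, dite_true, dite_false, add_zero]
    rfl
  map_smul' c n := funext fun ρ => by
    by_cases h : ρ ∈ Δ <;>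
      simp only [Pi.smul_apply, RingHom.id_apply, h, dite_true, dite_false, smul_zero]
    rfl

lemma extend_of_mem (n : TwistedSeries M hΔ hD) {ρ : MIdx p} (h : ρ ∈ Δ) :
    extend hΔ hD n ρ = n ⟨ρ, h⟩ :=
  dif_pos h

variable [Module A M]

instance : SMul A (TwistedSeries M hΔ hD) :=
  ⟨fun a n α => ∑ β ∈ Finset.Iic α.1, D β a • extend hΔ hD n (α.1 - β)⟩

lemma smul_apply (a : A) (n : TwistedSeries M hΔ hD) (α : Δ) :
    (a • n) α = ∑ β ∈ Finset.Iic α.1, D β a • extend hΔ hD n (α.1 - β) :=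
  rfl

lemma extend_smul (a : A) (n : TwistedSeries M hΔ hD) {ρ : MIdx p} (h : ρ ∈ Δ) :
    extend hΔ hD (a • n) ρ = ∑ β ∈ Finset.Iic ρ, D β a • extend hΔ hD n (ρ - β) := by
  rw [extend_of_mem _ h, smul_apply]

instance : Module A (TwistedSeries M hΔ hD) where
  one_smul n := funext fun α => by
    rw [smul_apply, Finset.sum_eq_single_of_mem 0 (Finset.mem_Iic.2 zero_le)]
    · rw [hD.apply_one hΔ hΔ.zero_mem, tsub_zero, extend_of_mem _ α.2]
      simp [one']
    · intro β hβ hβ0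
      rw [hD.apply_one hΔ (hΔ.mem_of_le α.2 (Finset.mem_Iic.1 hβ))]
      simp [one', hβ0]
  mul_smul a b n := funext fun α => by
    have hα := α.2
    rw [smul_apply, smul_apply]
    calc _ = ∑ u ∈ Finset.Iic α.1, ∑ i ∈ Finset.Iic u,
          (D i a * D (u - i) b) • extend hΔ hD n (α.1 - u) :=
          Finset.sum_congr rfl fun u hu => by
            rw [hD.2 u (hΔ.mem_of_le hα (Finset.mem_Iic.1 hu)), Finset.sum_smul]
      _ = ∑ i ∈ Finset.Iic α.1, ∑ j ∈ Finset.Iic (α.1 - i),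
          (D i a * D j b) • extend hΔ hD n (α.1 - i - j) :=
          (sum_Iic_assoc α.1 fun i j ρ => (D i a * D j b) • extend hΔ hD n ρ).symm
      _ = _ := Finset.sum_congr rfl fun i _ => by
          rw [extend_smul _ _ (hΔ.tsub_mem hα i), Finset.smul_sum]
          simp only [smul_smul]
  smul_zero a := funext fun α => Finset.sum_eq_zero fun β _ => by
    rw [map_zero, Pi.zero_apply, smul_zero]
  smul_add a n m := funext fun α => by
    simp only [smul_apply, map_add, Pi.add_apply, smul_add, Finset.sum_add_distrib]
    rfl
  add_smul a b n := funext fun α => by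
    simp only [smul_apply, map_add, add_smul, Finset.sum_add_distrib]
    rfl
  zero_smul n := funext fun α => Finset.sum_eq_zero fun β _ => by
    rw [map_zero, zero_smul]

variable [IsScalarTower k A M]

instance : IsScalarTower k A (TwistedSeries M hΔ hD) :=
  ⟨fun c a n => funext fun α => by
    change ∑ β ∈ Finset.Iic α.1, D β (c • a) • extend hΔ hD n (α.1 - β)
      = c • ∑ β ∈ Finset.Iic α.1, D β a • extend hΔ hD n (α.1 - β)
    simp only [Finset.smul_sum, map_smul, smul_assoc]⟩

variable (hΔ hD) in
def derivation (d : Derivation k A M) : Derivation k A (TwistedSeries M hΔ hD) :=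
  Derivation.mk' (LinearMap.pi fun α : Δ => d.toLinearMap ∘ₗ D α.1) fun a b => funext fun α => by
    change d (D α.1 (a * b)) = (a • _ : TwistedSeries M hΔ hD) α + (b • _ : TwistedSeries M hΔ hD) α
    rw [hD.2 α.1 α.2, map_sum, smul_apply, smul_apply,
      sum_Iic_tsub_comm α.1 fun β γ => D β b • extend hΔ hD _ γ, ← Finset.sum_add_distrib]
    refine Finset.sum_congr rfl fun β hβ => ?_
    rw [extend_of_mem _ (hΔ.tsub_mem α.2 β),
      extend_of_mem _ (hΔ.mem_of_le α.2 (Finset.mem_Iic.1 hβ)), Derivation.leibniz]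
    rfl

end TwistedSeries

end TwistedSeries

open scoped KaehlerDifferential

noncomputable section Kaehler

variable {k A : Type*} [CommRing k] [CommRing A] [Algebra k A]

lemma KaehlerDifferential.induction_smul_D {motive : Ω[A⁄k] → Prop} (zero : motive 0)
    (add : ∀ x y, motive x → motive y → motive (x + y))
    (smul_D : ∀ a b : A, motive (a • KaehlerDifferential.D k A b)) (ω : Ω[A⁄k]) :
    motive ω := by
  have hω : ω ∈ Submodule.span A (Set.range (KaehlerDifferential.D k A)) := by
    rw [KaehlerDifferential.span_range_derivation]
    trivial
  suffices ∀ a : A, motive (a • ω) by simpa using this 1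
  induction hω using Submodule.span_induction with
  | mem x hx =>
    obtain ⟨b, rfl⟩ := hx
    exact fun a => smul_D a b
  | zero => exact fun a => by simpa using zero
  | add x y _ _ hx hy => exact fun a => by simpa [smul_add] using add _ _ (hx a) (hy a)
  | smul c x _ hx => exact fun a => by simpa [smul_smul] using hx (a * c)

lemma KaehlerDifferential.linearMap_ext_smul_D {N : Type*} [AddCommMonoid N] [Module k N]
    {f g : Ω[A⁄k] →ₗ[k] N}
    (h : ∀ a b : A, f (a • KaehlerDifferential.D k A b) = g (a • KaehlerDifferential.D k A b)) :
    f = g :=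
  LinearMap.ext (KaehlerDifferential.induction_smul_D (by simp)
    (fun x y hx hy => by simp [hx, hy]) h)

variable {p : ℕ} {Δ : Set (MIdx p)} {D E : MIdx p → Module.End k A}
  {hΔ : IsCoideal Δ} {hD : IsHS k A Δ D}

variable (hΔ hD) in
/-- The coefficients `fLie^p_Δ(D)_α` of the paper; they vanish for `α ∉ Δ`. -/
def fLie (α : MIdx p) : Module.End k Ω[A⁄k] :=
  LinearMap.proj α ∘ₗ TwistedSeries.extend hΔ hD ∘ₗ
    ((TwistedSeries.derivation hΔ hD (KaehlerDifferential.D k A)).liftKaehlerDifferential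
      |>.restrictScalars k)

lemma fLie_apply (α : MIdx p) (ω : Ω[A⁄k]) :
    fLie hΔ hD α ω = TwistedSeries.extend hΔ hD
      ((TwistedSeries.derivation hΔ hD (KaehlerDifferential.D k A)).liftKaehlerDifferential ω) α :=
  rfl

lemma fLie_isSemilinearSeries : IsSemilinearSeries Δ D (fLie hΔ hD) := by
  intro α hα a ω
  rw [fLie_apply, LinearMap.map_smul, TwistedSeries.extend_smul _ _ hα]
  rfl

lemma fLie_D {α : MIdx p} (hα : α ∈ Δ) (b : A) :
    fLie hΔ hD α (KaehlerDifferential.D k A b) = KaehlerDifferential.D k A (D α b) := by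
  rw [fLie_apply, Derivation.liftKaehlerDifferential_comp_D, TwistedSeries.extend_of_mem _ hα]
  rfl

lemma fLie_smul_D {α : MIdx p} (hα : α ∈ Δ) (a b : A) :
    fLie hΔ hD α (a • KaehlerDifferential.D k A b)
      = ∑ β ∈ Finset.Iic α, D β a • KaehlerDifferential.D k A (D (α - β) b) := by
  rw [fLie_isSemilinearSeries α hα]
  exact Finset.sum_congr rfl fun β _ => by rw [fLie_D (hΔ.tsub_mem hα β)]

lemma fLie_zero : fLie hΔ hD 0 = 1 :=
  KaehlerDifferential.linearMap_ext_smul_D fun a b => by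
    rw [fLie_smul_D hΔ.zero_mem, sum_Iic_zero, tsub_zero, hD.1]
    rfl

/-- Uniqueness holds because `Ω_{A/k}` is generated by the `a • d b`. -/
lemma eq_fLie_of_isSemilinearSeries {Φ : MIdx p → Module.End k Ω[A⁄k]}
    (hΦ : IsSemilinearSeries Δ D Φ)
    (hd : ∀ α ∈ Δ, ∀ b, Φ α (KaehlerDifferential.D k A b) = KaehlerDifferential.D k A (D α b))
    {α : MIdx p} (hα : α ∈ Δ) : Φ α = fLie hΔ hD α :=
  KaehlerDifferential.linearMap_ext_smul_D fun a b => by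
    rw [hΦ α hα, fLie_smul_D hα]
    exact Finset.sum_congr rfl fun β _ => by rw [hd _ (hΔ.tsub_mem hα β)]

lemma fLie_congr {hE : IsHS k A Δ E} (hDE : ∀ α ∈ Δ, D α = E α) {α : MIdx p} (hα : α ∈ Δ) :
    fLie hΔ hD α = fLie hΔ hE α :=
  (eq_fLie_of_isSemilinearSeries (fLie_isSemilinearSeries.congr hΔ hDE)
    (fun γ hγ b => by rw [fLie_D hγ, hDE γ hγ]) hα).symm

lemma fLie_sconv {hE : IsHS k A Δ E} {α : MIdx p} (hα : α ∈ Δ) :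
    fLie hΔ (hD.sconv hΔ hE) α = sconv (fLie hΔ hD) (fLie hΔ hE) α := by
  refine (eq_fLie_of_isSemilinearSeries
    (fLie_isSemilinearSeries.sconv hΔ fLie_isSemilinearSeries) (fun γ hγ b => ?_) hα).symm
  rw [sconv_apply, sconv, LinearMap.sum_apply, map_sum]
  refine Finset.sum_congr rfl fun u hu => ?_
  beta_reduce
  rw [fLie_D (hΔ.tsub_mem hγ u), fLie_D (hΔ.mem_of_le hγ (Finset.mem_Iic.1 hu))]
  rfl

lemma fapply_fLie_D (aS : MIdx p → A) {α : MIdx p} (hα : α ∈ Δ) :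
    fapply (fLie hΔ hD) (fun β => KaehlerDifferential.D k A (aS β)) α
      = KaehlerDifferential.D k A (fapply D aS α) := by
  rw [fapply, fapply, map_sum]
  exact Finset.sum_congr rfl fun β hβ => fLie_D (hΔ.mem_of_le hα (Finset.mem_Iic.1 hβ)) _

lemma eq_fLie_of_fapply {Φ : MIdx p → Module.End k Ω[A⁄k]}
    (hΦ : ∀ (a : MIdx p → A) (m : MIdx p → Ω[A⁄k]), ∀ α ∈ Δ,
      fapply Φ (smul' a m) α = smul' (fapply D a) (fapply Φ m) α)
    (hd : ∀ aS : MIdx p → A, ∀ α ∈ Δ,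
      fapply Φ (fun β => KaehlerDifferential.D k A (aS β)) α
        = KaehlerDifferential.D k A (fapply D aS α))
    {α : MIdx p} (hα : α ∈ Δ) : Φ α = fLie hΔ hD α := by
  refine eq_fLie_of_isSemilinearSeries ((isSemilinearSeries_iff_fapply_smul' hΔ).2 hΦ)
    (fun γ hγ b => ?_) hα
  have h := hd (Pi.single 0 b) γ hγ
  rwa [funext (Pi.apply_single (fun _ => KaehlerDifferential.D k A) (fun _ => map_zero _) 0 b),
    fapply_single_zero, fapply_single_zero] at h

end Kaehler

namespace SubstMap

variable {A : Type*} [CommRing A] {p q : ℕ} {Δ : Set (MIdx p)} {nab : Set (MIdx q)}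
  (φ : SubstMap A p q Δ nab)

lemma C_eq_zero_of_not_le {α : MIdx p} {e : MIdx q} (h : ¬ α ≤ fun _ => wt e) :
    φ.C α e = 0 := by
  by_cases he : e ∈ nab
  · by_cases hα : α ∈ Δ
    · exact φ.c_ord α hα e he (lt_wt_of_not_le_const h)
    · exact φ.c_suppL α hα e
  · exact φ.c_suppR α e he

lemma sum_C_mul_C (hΔ : IsCoideal Δ) {e : MIdx q} (he : e ∈ nab) (β γ : MIdx p) :
    ∑ u ∈ Finset.Iic e, φ.C β u * φ.C γ (e - u) = φ.C (β + γ) e := by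
  by_cases hβ : β ∈ Δ
  · by_cases hγ : γ ∈ Δ
    · exact (φ.c_mul β hβ γ hγ e he).symm
    · rw [φ.c_suppL _ fun h => hγ (hΔ.mem_of_le h le_add_self)]
      exact Finset.sum_eq_zero fun u _ => by rw [φ.c_suppL γ hγ, mul_zero]
  · rw [φ.c_suppL _ fun h => hβ (hΔ.mem_of_le h le_self_add)]
    exact Finset.sum_eq_zero fun u _ => by rw [φ.c_suppL β hβ, zero_mul]

section Module

variable {M : Type*} [AddCommMonoid M] [Module A M]

lemma bulletM_eq_sum_Iic_const {e : MIdx q} {n : ℕ} (h : wt e ≤ n) (f : MIdx p → M) :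
    φ.bulletM f e = ∑ α ∈ Finset.Iic (fun _ => n), φ.C α e • f α :=
  Finset.sum_subset (Finset.Iic_subset_Iic.2 fun _ => h) fun α _ hα => by
    rw [φ.C_eq_zero_of_not_le fun hle => hα (Finset.mem_Iic.2 hle), zero_smul]

lemma bulletM_congr {f g : MIdx p → M} (h : ∀ α ∈ Δ, f α = g α) (e : MIdx q) :
    φ.bulletM f e = φ.bulletM g e :=
  Finset.sum_congr rfl fun α _ => by
    by_cases hα : α ∈ Δ
    · rw [h α hα]
    · rw [φ.c_suppL α hα e, zero_smul, zero_smul]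

/-- Substitution maps are multiplicative, for any bilinear pairing of the coefficients. -/
lemma bulletM_convolution {N P : Type*} [AddCommMonoid N] [Module A N] [AddCommMonoid P]
    [Module A P] (hΔ : IsCoideal Δ) (B : M →ₗ[A] N →ₗ[A] P) (f : MIdx p → M)
    (g : MIdx p → N) {e : MIdx q} (he : e ∈ nab) :
    φ.bulletM (fun α => ∑ β ∈ Finset.Iic α, B (f β) (g (α - β))) e
      = ∑ u ∈ Finset.Iic e, B (φ.bulletM f u) (φ.bulletM g (e - u)) := by
  set K : MIdx p := fun _ => wt e
  calc _ = ∑ β ∈ Finset.Iic K, ∑ γ ∈ Finset.Iic K, φ.C (β + γ) e • B (f β) (g γ) := by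
        rw [bulletM, ← sum_Iic_sum_Iic_tsub_eq_of_vanish K _ fun β γ h => by
          rw [φ.C_eq_zero_of_not_le h, zero_smul]]
        refine Finset.sum_congr rfl fun α _ => ?_
        rw [Finset.smul_sum]
        exact Finset.sum_congr rfl fun β hβ => by
          rw [add_tsub_cancel_of_le (Finset.mem_Iic.1 hβ)]
    _ = ∑ β ∈ Finset.Iic K, ∑ γ ∈ Finset.Iic K, ∑ u ∈ Finset.Iic e,
          (φ.C β u * φ.C γ (e - u)) • B (f β) (g γ) := by
        simp only [← Finset.sum_smul, φ.sum_C_mul_C hΔ he]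
    _ = ∑ u ∈ Finset.Iic e, ∑ β ∈ Finset.Iic K, ∑ γ ∈ Finset.Iic K,
          (φ.C β u * φ.C γ (e - u)) • B (f β) (g γ) := by
        exact (Finset.sum_congr rfl fun β _ => Finset.sum_comm).trans Finset.sum_comm
    _ = _ := Finset.sum_congr rfl fun u hu => by
        rw [φ.bulletM_eq_sum_Iic_const (wt_strictMono.monotone (Finset.mem_Iic.1 hu)),
          φ.bulletM_eq_sum_Iic_const (wt_strictMono.monotone (tsub_le_self (a := e) (b := u)))]
        symm
        rw [map_sum B, LinearMap.sum_apply]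
        refine Finset.sum_congr rfl fun β _ => ?_
        rw [map_smul, LinearMap.smul_apply, map_sum, Finset.smul_sum]
        exact Finset.sum_congr rfl fun γ _ => by rw [map_smul, smul_smul]

end Module

variable {k : Type*} [CommRing k] [Algebra k A]

lemma bulletEnd_apply (D : MIdx p → Module.End k A) (e : MIdx q) (x : A) :
    φ.bulletEnd D e x = φ.bulletM (fun α => D α x) e := by
  rw [bulletEnd, LinearMap.sum_apply]
  rfl

lemma derivation_bulletM (hφ : φ.HasConstCoeffs k) {M : Type*} [AddCommGroup M] [Module A M]
    [Module k M] [IsScalarTower k A M] (d : Derivation k A M) (f : MIdx p → A) (e : MIdx q) :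
    d (φ.bulletM f e) = φ.bulletM (fun α => d (f α)) e := by
  rw [bulletM, map_sum]
  refine Finset.sum_congr rfl fun α _ => ?_
  obtain ⟨c, hc⟩ := hφ α e
  rw [← hc, algebraMap_smul, d.map_smul, algebraMap_smul]

end SubstMap

section Subst

variable {k A : Type*} [CommRing k] [CommRing A] [Algebra k A] {p q : ℕ} {Δ : Set (MIdx p)}
  {nab : Set (MIdx q)} (φ : SubstMap A p q Δ nab) {D : MIdx p → Module.End k A}

lemma IsHS.bulletEnd (hΔ : IsCoideal Δ) (hnab : IsCoideal nab) (hD : IsHS k A Δ D) :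
    IsHS k A nab (φ.bulletEnd D) := by
  refine ⟨LinearMap.ext fun x => ?_, fun e he x y => ?_⟩
  · have hK : (fun _ => wt (0 : MIdx q) : MIdx p) = 0 := funext fun _ => Finset.sum_const_zero
    rw [φ.bulletEnd_apply, SubstMap.bulletM, hK, sum_Iic_zero, φ.c_zero 0 hnab.zero_mem, if_pos rfl,
      one_smul, hD.1]
  · rw [φ.bulletEnd_apply, φ.bulletM_congr fun α hα => hD.2 α hα x y]
    refine (φ.bulletM_convolution hΔ (LinearMap.mul A A) (D · x) (D · y) he).trans ?_
    simp only [φ.bulletEnd_apply, LinearMap.mul_apply']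

lemma fLie_bulletEnd (hΔ : IsCoideal Δ) (hnab : IsCoideal nab) (hD : IsHS k A Δ D)
    (hφ : φ.HasConstCoeffs k) {e : MIdx q} (he : e ∈ nab) (x : Ω[A⁄k]) :
    fLie hnab (hD.bulletEnd φ hΔ hnab) e x = φ.bulletM (fun α => fLie hΔ hD α x) e := by
  induction x using KaehlerDifferential.induction_smul_D with
  | zero => simp [SubstMap.bulletM]
  | add x y hx hy =>
    simp only [map_add, hx, hy, SubstMap.bulletM, smul_add, Finset.sum_add_distrib]
  | smul_D a b =>
    rw [fLie_smul_D he, φ.bulletM_congr fun α hα => fLie_smul_D hα a b]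
    refine Eq.trans ?_ (φ.bulletM_convolution hΔ (LinearMap.lsmul A Ω[A⁄k]) (D · a)
      (fun γ => KaehlerDifferential.D k A (D γ b)) he).symm
    refine Finset.sum_congr rfl fun u _ => ?_
    rw [φ.bulletEnd_apply, φ.bulletEnd_apply, φ.derivation_bulletM hφ]
    rfl

end Subst

section System

variable (k A : Type*) [CommRing k] [CommRing A] [Algebra k A]

/-- The value `one'` off co-ideals and HS-derivations is an arbitrary filler. -/
noncomputable def fLieSystem : HSSystem k A Ω[A⁄k] := fun _ Δ D =>
  if h : IsCoideal Δ ∧ IsHS k A Δ D then fLie h.1 h.2 else one'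

variable {k A}

lemma fLieSystem_eq {p : ℕ} {Δ : Set (MIdx p)} {D : MIdx p → Module.End k A}
    (hΔ : IsCoideal Δ) (hD : IsHS k A Δ D) : fLieSystem k A p Δ D = fLie hΔ hD :=
  dif_pos ⟨hΔ, hD⟩

variable (k A) in
lemma fLieSystem_isPreHSMod : IsPreHSMod k A Ω[A⁄k] (fLieSystem k A) := by
  intro p Δ hΔ D hD
  rw [fLieSystem_eq hΔ hD]
  refine ⟨fLie_zero, fun D' hD' hDD' α hα => ?_, fun E hE α hα => ?_,
    ⟨sconvInv (fLie hΔ hD), fun α _ => by rw [sconv_sconvInv fLie_zero],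
      fun α _ => by rw [sconvInv_sconv fLie_zero]⟩,
    (isSemilinearSeries_iff_fapply_smul' hΔ).1 fLie_isSemilinearSeries,
    fun q nab hnab φ hφ e he x => ?_⟩
  · rw [fLieSystem_eq hΔ hD', fLie_congr hDD' hα]
  · rw [fLieSystem_eq hΔ hE, fLieSystem_eq hΔ (hD.sconv hΔ hE), fLie_sconv hα]
  · rw [fLieSystem_eq hnab (hD.bulletEnd φ hΔ hnab), fLie_bulletEnd φ hΔ hnab hD hφ he]
    rfl

end System

/-- The `A`-module `Ω_{A/k}` of Kähler differentials carries a
unique left pre-HS-module structure over `A/k` such that the universal derivation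
`d : A → Ω_{A/k}` is a HS-map, i.e. `Ψ^p_Δ(D) ∘ d̄ = d̄ ∘ D̃` for every `p`, every
non-empty co-ideal `Δ ⊆ ℕ^p` and every `D ∈ HS^p_k(A;Δ)`.  In particular
`Ψ^p_Δ(D)_α ∘ d = d ∘ D_α` for all `α ∈ Δ`. -/
theorem stmt12 (k A : Type*) [CommRing k] [CommRing A] [Algebra k A] :
    ∃ Ψ : HSSystem k A (KaehlerDifferential k A),
      (IsPreHSMod k A (KaehlerDifferential k A) Ψ
        ∧ (∀ (p : ℕ) (Δ : Set (MIdx p)), IsCoideal Δ →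
            ∀ D : MIdx p → Module.End k A, IsHS k A Δ D →
              (∀ aS : MIdx p → A, ∀ α ∈ Δ,
                fapply (Ψ p Δ D) (fun β => KaehlerDifferential.D k A (aS β)) α
                  = KaehlerDifferential.D k A (fapply D aS α))
              ∧ (∀ α ∈ Δ, ∀ a : A,
                  Ψ p Δ D α (KaehlerDifferential.D k A a)
                    = KaehlerDifferential.D k A (D α a))))
      ∧ (∀ Ψ' : HSSystem k A (KaehlerDifferential k A),
          IsPreHSMod k A (KaehlerDifferential k A) Ψ' →
          (∀ (p : ℕ) (Δ : Set (MIdx p)), IsCoideal Δ →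
            ∀ D : MIdx p → Module.End k A, IsHS k A Δ D →
              ∀ aS : MIdx p → A, ∀ α ∈ Δ,
                fapply (Ψ' p Δ D) (fun β => KaehlerDifferential.D k A (aS β)) α
                  = KaehlerDifferential.D k A (fapply D aS α)) →
          ∀ (p : ℕ) (Δ : Set (MIdx p)), IsCoideal Δ →
            ∀ D : MIdx p → Module.End k A, IsHS k A Δ D →
              ∀ α ∈ Δ, Ψ' p Δ D α = Ψ p Δ D α) := by
  refine ⟨fLieSystem k A, ⟨fLieSystem_isPreHSMod k A, fun p Δ hΔ D hD => ?_⟩,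
    fun Ψ hΨ hd p Δ hΔ D hD α hα => ?_⟩
  all_goals rw [fLieSystem_eq hΔ hD]
  · exact ⟨fun aS α hα => fapply_fLie_D aS hα, fun α hα a => fLie_D hα a⟩
  · exact eq_fLie_of_fapply (hΨ p Δ hΔ D hD).2.2.2.2.1 (hd p Δ hΔ D hD) hα

end HS
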